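/- arXiv:2406.00203 — 2 statements merged into one kernel-verified Lean document; each statement's English description precedes it below -/
import Mathlib

section
/- Let {ẑ_β} and {z_β} be defined by z_β = (1/2)√(b̂_β² - 1) and ẑ_β = (1/2)√((b̂_β - d_β)² - 1), where b̂_β > 1 + d_β and d_β ≥ 0. If ∑_β d_β/(b̂_β - d_β - 1) < ∞ and sup_β b̂_β < ∞, then the infinite product ∏_β (z_β/ẑ_β) converges to a finite value bounded by exp(c·sup_γ b̂_γ·∑_β d_β/(b̂_β - d_β - 1)) for a numerical constant c. -/
/-!
Writing `z/ẑ = √(A/B)` with `A = b̂² - 1` and `B = (b̂ - d)² - 1 = (b̂ - d - 1)(b̂ - d + 1)`, one has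
`A - B = d(2b̂ - d)` and `b̂ - d + 1 > 2`, so `1 ≤ A/B ≤ 1 + b̂·d/(b̂ - d - 1)`. Hence
`0 ≤ log(z/ẑ) ≤ (b̂/2)·d/(b̂ - d - 1)`, the logarithms are summable, and the product equals
`exp(∑ log(z/ẑ)) ≤ exp((1/2)·sup b̂·∑ d/(b̂ - d - 1))`: the constant `c = 1/2` works.
-/

open Real

theorem Real.multipliable_and_tprod_le_exp_tsum_of_log_le {ι : Type*} {f g : ι → ℝ}
    (hf : ∀ i, 1 ≤ f i) (hfg : ∀ i, log (f i) ≤ g i) (hg : Summable g) :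
    Multipliable f ∧ ∏' i, f i ≤ exp (∑' i, g i) := by
  have hpos : ∀ i, 0 < f i := fun i => one_pos.trans_le (hf i)
  have hlog : Summable fun i => log (f i) :=
    hg.of_nonneg_of_le (fun i => log_nonneg (hf i)) hfg
  refine ⟨multipliable_of_summable_log hpos hlog, ?_⟩
  rw [← rexp_tsum_eq_tprod hpos hlog]
  exact exp_le_exp.2 (hlog.tsum_le_tsum hfg hg)

theorem half_sqrt_div_half_sqrt (x : ℝ) {y : ℝ} (hy : 0 ≤ y) :
    (1 / 2 * √x) / (1 / 2 * √y) = √(x / y) := by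
  rw [sqrt_div' x hy, mul_div_mul_left _ _ (by norm_num)]

section SqSubOneRatio

variable {b d : ℝ}

theorem one_le_sq_sub_one_div (hd : 0 ≤ d) (hb : 1 + d < b) :
    1 ≤ (b ^ 2 - 1) / ((b - d) ^ 2 - 1) := by
  rw [one_le_div (by nlinarith)]
  nlinarith

theorem sq_sub_one_div_le (hd : 0 ≤ d) (hb : 1 + d < b) :
    (b ^ 2 - 1) / ((b - d) ^ 2 - 1) ≤ 1 + b * (d / (b - d - 1)) := by
  have hgap : 0 < b - d - 1 := by linarith
  have hden : 0 < (b - d) ^ 2 - 1 := by nlinarith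
  have hexcess : d * (2 * b - d) / ((b - d) ^ 2 - 1) ≤ b * (d / (b - d - 1)) := by
    rw [mul_div_assoc', div_le_div_iff₀ hden hgap]
    have hb0 : 0 ≤ b := by linarith
    -- the difference of the two sides is `d (b - d - 1) (b (b - d - 1) + d)`
    nlinarith [mul_nonneg (mul_nonneg hd hgap.le) (add_nonneg (mul_nonneg hb0 hgap.le) hd)]
  calc (b ^ 2 - 1) / ((b - d) ^ 2 - 1) = 1 + d * (2 * b - d) / ((b - d) ^ 2 - 1) := by
        field_simp; ring
    _ ≤ 1 + b * (d / (b - d - 1)) := by linarith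

theorem one_le_half_sqrt_div_half_sqrt (hd : 0 ≤ d) (hb : 1 + d < b) :
    1 ≤ (1 / 2 * √(b ^ 2 - 1)) / (1 / 2 * √((b - d) ^ 2 - 1)) := by
  have hden : 0 < (b - d) ^ 2 - 1 := by nlinarith
  rw [half_sqrt_div_half_sqrt _ hden.le, one_le_sqrt]
  exact one_le_sq_sub_one_div hd hb

theorem log_half_sqrt_div_half_sqrt_le (hd : 0 ≤ d) (hb : 1 + d < b) :
    log ((1 / 2 * √(b ^ 2 - 1)) / (1 / 2 * √((b - d) ^ 2 - 1))) ≤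
      b * (d / (b - d - 1)) / 2 := by
  have hden : 0 < (b - d) ^ 2 - 1 := by nlinarith
  have hratio := one_le_sq_sub_one_div hd hb
  rw [half_sqrt_div_half_sqrt _ hden.le, log_sqrt (by linarith)]
  have := log_le_sub_one_of_pos (by linarith : 0 < (b ^ 2 - 1) / ((b - d) ^ 2 - 1))
  linarith [sq_sub_one_div_le hd hb]

end SqSubOneRatio

/-- With `z_β = (1/2)√(b̂_β²-1)` and `ẑ_β = (1/2)√((b̂_β-d_β)²-1)`, where `d_β ≥ 0`,
`b̂_β > 1 + d_β`, `∑_β d_β/(b̂_β-d_β-1) < ∞` and `sup_β b̂_β < ∞`, the infinite product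
`∏_β z_β/ẑ_β` converges and is bounded by
`exp(c·(sup_γ b̂_γ)·∑_β d_β/(b̂_β-d_β-1))` for a numerical constant `c`. -/
theorem stmt_11 :
    ∃ c : ℝ, 0 < c ∧ ∀ (bhat d : ℕ → ℝ),
      (∀ n, 0 ≤ d n) → (∀ n, 1 + d n < bhat n) →
      Summable (fun n => d n / (bhat n - d n - 1)) →
      BddAbove (Set.range bhat) →
      Multipliable (fun n =>
        ((1 / 2) * Real.sqrt ((bhat n) ^ 2 - 1)) /
          ((1 / 2) * Real.sqrt ((bhat n - d n) ^ 2 - 1))) ∧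
      (∏' n, ((1 / 2) * Real.sqrt ((bhat n) ^ 2 - 1)) /
          ((1 / 2) * Real.sqrt ((bhat n - d n) ^ 2 - 1)))
        ≤ Real.exp (c * (⨆ n, bhat n) * ∑' n, d n / (bhat n - d n - 1)) := by
  refine ⟨1 / 2, one_half_pos, fun bhat d hd hb hsum hbdd => ?_⟩
  have hle_sup : ∀ n, bhat n ≤ ⨆ n, bhat n := le_ciSup hbdd
  have hlog : ∀ n, log ((1 / 2 * √(bhat n ^ 2 - 1)) / (1 / 2 * √((bhat n - d n) ^ 2 - 1))) ≤
      1 / 2 * (⨆ n, bhat n) * (d n / (bhat n - d n - 1)) := fun n =>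
    (log_half_sqrt_div_half_sqrt_le (hd n) (hb n)).trans <| by
      have ht : 0 ≤ d n / (bhat n - d n - 1) := div_nonneg (hd n) (by linarith [hb n])
      nlinarith [hle_sup n]
  rw [← tsum_mul_left]
  exact multipliable_and_tprod_le_exp_tsum_of_log_le
    (fun n => one_le_half_sqrt_div_half_sqrt (hd n) (hb n)) hlog (hsum.mul_left _)
end

section
/- For 0 < r ≤ 1, with b_i = 1/i and ε_i = 2^{-(i-1)}, the three sums S₁ = ∑_{i≥1}(b_i^{-1}-1)²·2^{-2r(i-1)}, S₂ = ∑_{i≥1} 2^{-2r(i-1)}, S₃ = ∑_{i≥1} 2^{-r(i-1)} satisfy √S₁ + c·S₂ + c·S₃ ≤ C/r^{3/2} for constants c, C independent of r. -/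
open scoped BigOperators

lemma one_sub_two_rpow_ge (r : ℝ) (hr : 0 < r) (hr1 : r ≤ 1) :
    r / 3 ≤ 1 - (2:ℝ) ^ (-r) := by
  have hln : Real.log 2 ≥ 2/3 := by
    have := Real.log_two_gt_d9
    linarith
  have h2r : (2:ℝ) ^ r ≤ 2 := by
    calc (2:ℝ) ^ r ≤ (2:ℝ) ^ (1:ℝ) :=
          Real.rpow_le_rpow_of_exponent_le (by norm_num) hr1
      _ = 2 := by norm_num
  have hpos : (0:ℝ) < (2:ℝ) ^ r := Real.rpow_pos_of_pos (by norm_num) r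
  have hexp : 1 + r * Real.log 2 ≤ (2:ℝ) ^ r := by
    rw [Real.rpow_def_of_pos (by norm_num)]
    rw [mul_comm (Real.log 2) r]
    have := Real.add_one_le_exp (r * Real.log 2)
    linarith [this]
  have hneg : (2:ℝ) ^ (-r) = ((2:ℝ) ^ r)⁻¹ := by
    rw [Real.rpow_neg (by norm_num)]
  rw [hneg]
  rw [le_sub_comm, inv_le_iff_one_le_mul₀ hpos] at *
  nlinarith [mul_pos hr (lt_of_lt_of_le (by norm_num : (0:ℝ) < 2/3) hln)]

/-- For `0 < r ≤ 1`, with `b_i = 1/i`, `ε_i = 2^{-(i-1)}` (reindexed by `n = i-1`, so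
`(b_i⁻¹-1)² ε_i^{2r} = n²·2^{-2rn}`), the sums
`S₁ = ∑ n²·2^{-2rn}`, `S₂ = ∑ 2^{-2rn}`, `S₃ = ∑ 2^{-rn}` satisfy
`√S₁ + c·S₂ + c·S₃ ≤ C/r^{3/2}` with `c, C` independent of `r`. -/
theorem stmt_19 (c : ℝ) (hc : 0 < c) :
    ∃ C : ℝ, 0 < C ∧ ∀ r : ℝ, 0 < r → r ≤ 1 →
      Real.sqrt (∑' n : ℕ, (n : ℝ) ^ 2 * (2 : ℝ) ^ (-2 * r * (n : ℝ)))
        + c * (∑' n : ℕ, (2 : ℝ) ^ (-2 * r * (n : ℝ)))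
        + c * (∑' n : ℕ, (2 : ℝ) ^ (-r * (n : ℝ)))
      ≤ C / r ^ ((3 : ℝ) / 2) := by
  refine ⟨8 + 6 * c, by positivity, fun r hr hr1 => ?_⟩
  set x : ℝ := (2:ℝ) ^ (-r) with hxdef
  set y : ℝ := (2:ℝ) ^ (-2*r) with hydef
  have hx0 : 0 < x := Real.rpow_pos_of_pos (by norm_num) _
  have hy0 : 0 < y := Real.rpow_pos_of_pos (by norm_num) _
  have hxr : r / 3 ≤ 1 - x := one_sub_two_rpow_ge r hr hr1
  have hyx : y ≤ x := by
    apply Real.rpow_le_rpow_of_exponent_le (by norm_num)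
    linarith
  have hyr : r / 3 ≤ 1 - y := by linarith
  have hx1 : x < 1 := by linarith [hr]
  have hy1 : y < 1 := by linarith [hr]
  -- rewrite rpow as pow
  have hxn : ∀ n : ℕ, (2:ℝ) ^ (-r * (n:ℝ)) = x ^ n := by
    intro n
    rw [hxdef, ← Real.rpow_natCast ((2:ℝ)^(-r)) n, ← Real.rpow_mul (by norm_num)]
  have hyn : ∀ n : ℕ, (2:ℝ) ^ (-2 * r * (n:ℝ)) = y ^ n := by
    intro n
    rw [hydef, ← Real.rpow_natCast ((2:ℝ)^(-2*r)) n, ← Real.rpow_mul (by norm_num)]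
  -- geometric sums
  have hS3 : (∑' n : ℕ, (2:ℝ) ^ (-r * (n:ℝ))) = (1 - x)⁻¹ := by
    simp_rw [hxn]
    exact tsum_geometric_of_lt_one hx0.le hx1
  have hS2 : (∑' n : ℕ, (2:ℝ) ^ (-2 * r * (n:ℝ))) = (1 - y)⁻¹ := by
    simp_rw [hyn]
    exact tsum_geometric_of_lt_one hy0.le hy1
  -- S1 bound
  have hynorm : ‖y‖ < 1 := by rw [Real.norm_eq_abs, abs_of_pos hy0]; exact hy1
  have hS1sum : Summable (fun n : ℕ => (n:ℝ) ^ 2 * y ^ n) :=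
    summable_pow_mul_geometric_of_norm_lt_one 2 hynorm
  have hS1big : Summable (fun n : ℕ => ((n + 2).choose 2 : ℝ) * y ^ n) :=
    summable_choose_mul_geometric_of_norm_lt_one 2 hynorm
  have hS1le : (∑' n : ℕ, (n:ℝ) ^ 2 * y ^ n) ≤ 2 / (1 - y) ^ 3 := by
    have hterm : ∀ n : ℕ, (n:ℝ) ^ 2 * y ^ n ≤ 2 * (((n + 2).choose 2 : ℝ) * y ^ n) := by
      intro n
      have hch : ((n + 2).choose 2 : ℝ) = ((n:ℝ)+2)*((n:ℝ)+1)/2 := by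
        rw [Nat.cast_choose_two]
        push_cast
        ring
      have hy : 0 ≤ y ^ n := pow_nonneg hy0.le n
      rw [hch]
      have hn : (0:ℝ) ≤ (n:ℝ) := Nat.cast_nonneg n
      nlinarith [mul_le_mul_of_nonneg_right
        (by nlinarith : (n:ℝ)^2 ≤ 2*(((n:ℝ)+2)*((n:ℝ)+1)/2)) hy]
    calc (∑' n : ℕ, (n:ℝ) ^ 2 * y ^ n)
        ≤ ∑' n : ℕ, 2 * (((n + 2).choose 2 : ℝ) * y ^ n) :=
          Summable.tsum_le_tsum hterm hS1sum (hS1big.mul_left 2)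
      _ = 2 * (1 / (1 - y) ^ 3) := by
          rw [tsum_mul_left, tsum_choose_mul_geometric_of_norm_lt_one 2 hynorm]
      _ = 2 / (1 - y) ^ 3 := by ring
  have hS1tsum : (∑' n : ℕ, (n:ℝ) ^ 2 * (2:ℝ) ^ (-2 * r * (n:ℝ))) ≤ 2 / (1 - y) ^ 3 := by
    simp_rw [hyn]; exact hS1le
  -- now numeric bounds
  have h1y : 0 < 1 - y := by linarith
  have h1x : 0 < 1 - x := by linarith
  have hcube : 2 / (1 - y) ^ 3 ≤ 54 / r ^ 3 := by
    rw [div_le_div_iff₀ (by positivity) (by positivity)]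
    nlinarith [pow_le_pow_left₀ (by positivity : (0:ℝ) ≤ r/3) hyr 3, pow_pos h1y 3, pow_pos hr 3]
  have hrpow : r ^ ((3:ℝ)/2) = Real.sqrt (r ^ 3) := by
    rw [Real.sqrt_eq_rpow, ← Real.rpow_natCast r 3, ← Real.rpow_mul hr.le]
    norm_num
  have hrp_pos : 0 < r ^ ((3:ℝ)/2) := Real.rpow_pos_of_pos hr _
  have hsqrt : Real.sqrt (∑' n : ℕ, (n:ℝ) ^ 2 * (2:ℝ) ^ (-2 * r * (n:ℝ)))
      ≤ 8 / r ^ ((3:ℝ)/2) := by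
    calc Real.sqrt (∑' n : ℕ, (n:ℝ) ^ 2 * (2:ℝ) ^ (-2 * r * (n:ℝ)))
        ≤ Real.sqrt (54 / r ^ 3) := Real.sqrt_le_sqrt (hS1tsum.trans hcube)
      _ = Real.sqrt 54 / Real.sqrt (r ^ 3) := Real.sqrt_div' 54 (by positivity)
      _ ≤ 8 / r ^ ((3:ℝ)/2) := by
          rw [hrpow]
          have h54 : Real.sqrt 54 ≤ 8 := by
            rw [show (8:ℝ) = Real.sqrt 64 by
              rw [show (64:ℝ) = 8^2 by norm_num, Real.sqrt_sq (by norm_num)]]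
            exact Real.sqrt_le_sqrt (by norm_num)
          have hs : 0 < Real.sqrt (r^3) := Real.sqrt_pos.mpr (by positivity)
          gcongr
  have hr32 : r ^ ((3:ℝ)/2) ≤ r := by
    calc r ^ ((3:ℝ)/2) ≤ r ^ (1:ℝ) :=
          Real.rpow_le_rpow_of_exponent_ge hr hr1 (by norm_num)
      _ = r := Real.rpow_one r
  have hgeo : ∀ S : ℝ, S ≤ (r/3)⁻¹ → c * S ≤ 3 * c / r ^ ((3:ℝ)/2) := by
    intro S hS
    have h1 : c * S ≤ c * (3 / r) := by
      apply mul_le_mul_of_nonneg_left _ hc.le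
      calc S ≤ (r/3)⁻¹ := hS
        _ = 3 / r := by field_simp
    calc c * S ≤ c * (3 / r) := h1
      _ = 3 * c / r := by ring
      _ ≤ 3 * c / r ^ ((3:ℝ)/2) := by
          apply div_le_div_of_nonneg_left (by positivity) hrp_pos hr32
  have hS2b : c * (∑' n : ℕ, (2:ℝ) ^ (-2 * r * (n:ℝ))) ≤ 3 * c / r ^ ((3:ℝ)/2) := by
    apply hgeo
    rw [hS2]
    exact inv_anti₀ (by positivity) hyr
  have hS3b : c * (∑' n : ℕ, (2:ℝ) ^ (-r * (n:ℝ))) ≤ 3 * c / r ^ ((3:ℝ)/2) := by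
    apply hgeo
    rw [hS3]
    exact inv_anti₀ (by positivity) hxr
  have : (8 + 6 * c) / r ^ ((3:ℝ)/2) = 8 / r ^ ((3:ℝ)/2) + 3 * c / r ^ ((3:ℝ)/2)
      + 3 * c / r ^ ((3:ℝ)/2) := by ring
  rw [this]
  exact add_le_add (add_le_add hsqrt hS2b) hS3b
end
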